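/- arXiv:1606.04871 — 13 statements merged into one kernel-verified Lean document; each statement's English description precedes it below -/
import Mathlib

section
/- Let (𝔫,𝔮,μ) be a Leibniz crossed module and (d,D) ∈ Bider(𝔮,𝔫). Then the pair (d∘μ, D∘μ) of k-linear maps 𝔫 → 𝔫 is a biderivation of the Leibniz algebra 𝔫. -/
/-- A Leibniz algebra structure (a bilinear bracket satisfying the Leibniz identity)
on a `k`-module `M`. -/
structure LeibnizBracket (k M : Type*) [CommRing k] [AddCommGroup M] [Module k M] where
  br : M →ₗ[k] M →ₗ[k] M
  leibniz : ∀ x y z : M, br (br x y) z = br x (br y z) + br (br x z) y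

/-- An action of a Leibniz algebra `P` on a Leibniz algebra `M`:
a pair of bilinear maps `pm : P × M → M`, `mp : M × P → M` satisfying the six
Leibniz action identities. -/
structure LeibnizAction (k P M : Type*) [CommRing k]
    [AddCommGroup P] [Module k P] [AddCommGroup M] [Module k M]
    (LP : LeibnizBracket k P) (LM : LeibnizBracket k M) where
  pm : P →ₗ[k] M →ₗ[k] M
  mp : M →ₗ[k] P →ₗ[k] M
  act1 : ∀ (p : P) (m m' : M), pm p (LM.br m m') = LM.br (pm p m) m' - LM.br (pm p m') m
  act2 : ∀ (m : M) (p : P) (m' : M), LM.br m (pm p m') = LM.br (mp m p) m' - mp (LM.br m m') p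
  act3 : ∀ (m m' : M) (p : P), LM.br m (mp m' p) = mp (LM.br m m') p - LM.br (mp m p) m'
  act4 : ∀ (m : M) (p p' : P), mp m (LP.br p p') = mp (mp m p) p' - mp (mp m p') p
  act5 : ∀ (p : P) (m : M) (p' : P), pm p (mp m p') = mp (pm p m) p' - pm (LP.br p p') m
  act6 : ∀ (p p' : P) (m : M), pm p (pm p' m) = pm (LP.br p p') m - mp (pm p m) p'

/-- A crossed module of Leibniz algebras `(N, Q, mu)`. -/
structure LeibnizXMod (k N Q : Type*) [CommRing k]
    [AddCommGroup N] [Module k N] [AddCommGroup Q] [Module k Q]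
    (LN : LeibnizBracket k N) (LQ : LeibnizBracket k Q) where
  act : LeibnizAction k Q N LQ LN
  mu : N →ₗ[k] Q
  map_br : ∀ n n', mu (LN.br n n') = LQ.br (mu n) (mu n')
  equiv1 : ∀ q n, mu (act.pm q n) = LQ.br q (mu n)
  equiv2 : ∀ n q, mu (act.mp n q) = LQ.br (mu n) q
  peiffer1 : ∀ n n', act.pm (mu n) n' = LN.br n n'
  peiffer2 : ∀ n n', act.mp n (mu n') = LN.br n n'

/-- `(d, D)` is a biderivation of the Leibniz algebra `M`. -/
def IsBider {k M : Type*} [CommRing k] [AddCommGroup M] [Module k M]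
    (LM : LeibnizBracket k M) (d D : M →ₗ[k] M) : Prop :=
  (∀ x y, d (LM.br x y) = LM.br (d x) y + LM.br x (d y)) ∧
  (∀ x y, D (LM.br x y) = LM.br (D x) y - LM.br (D y) x) ∧
  (∀ x y, LM.br x (d y) = LM.br x (D y))

/-- `(d, D)` is a biderivation from `Q` to `N`, relative to an action of `Q` on `N`. -/
def IsBiderQN {k Q N : Type*} [CommRing k] [AddCommGroup Q] [Module k Q]
    [AddCommGroup N] [Module k N] {LQ : LeibnizBracket k Q} {LN : LeibnizBracket k N}
    (a : LeibnizAction k Q N LQ LN) (d D : Q →ₗ[k] N) : Prop :=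
  (∀ q q', d (LQ.br q q') = a.mp (d q) q' + a.pm q (d q')) ∧
  (∀ q q', D (LQ.br q q') = a.mp (D q) q' - a.mp (D q') q) ∧
  (∀ q q', a.pm q (d q') = a.pm q (D q'))

/-- `((s1,t1),(s2,t2))` is a biderivation of the Leibniz crossed module `X = (N,Q,mu)`. -/
def IsBiderXMod {k N Q : Type*} [CommRing k] [AddCommGroup N] [Module k N]
    [AddCommGroup Q] [Module k Q] {LN : LeibnizBracket k N} {LQ : LeibnizBracket k Q}
    (X : LeibnizXMod k N Q LN LQ) (s1 t1 : N →ₗ[k] N) (s2 t2 : Q →ₗ[k] Q) : Prop :=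
  IsBider LN s1 t1 ∧ IsBider LQ s2 t2 ∧
  (∀ n, X.mu (s1 n) = s2 (X.mu n)) ∧ (∀ n, X.mu (t1 n) = t2 (X.mu n)) ∧
  (∀ q n, s1 (X.act.pm q n) = X.act.pm (s2 q) n + X.act.pm q (s1 n)) ∧
  (∀ n q, s1 (X.act.mp n q) = X.act.mp (s1 n) q + X.act.mp n (s2 q)) ∧
  (∀ q n, t1 (X.act.pm q n) = X.act.pm (t2 q) n - X.act.mp (t1 n) q) ∧
  (∀ n q, t1 (X.act.mp n q) = X.act.mp (t1 n) q - X.act.pm (t2 q) n) ∧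
  (∀ q n, X.act.pm q (s1 n) = X.act.pm q (t1 n)) ∧
  (∀ n q, X.act.mp n (s2 q) = X.act.mp n (t2 q))

/-- The bracket `[(d₁,D₁),(d₂,D₂)] = (d₁μd₂ − d₂μd₁, D₁μd₂ − d₂μD₁)` on pairs of maps `Q → N`. -/
def brQN {k N Q : Type*} [CommRing k] [AddCommGroup N] [Module k N]
    [AddCommGroup Q] [Module k Q] (mu : N →ₗ[k] Q)
    (a b : (Q →ₗ[k] N) × (Q →ₗ[k] N)) : (Q →ₗ[k] N) × (Q →ₗ[k] N) :=
  (a.1 ∘ₗ mu ∘ₗ b.1 - b.1 ∘ₗ mu ∘ₗ a.1, a.2 ∘ₗ mu ∘ₗ b.1 - b.1 ∘ₗ mu ∘ₗ a.2)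

/-- The componentwise bracket on quadruples `((σ₁,θ₁),(σ₂,θ₂))`. -/
def brX {k N Q : Type*} [CommRing k] [AddCommGroup N] [Module k N]
    [AddCommGroup Q] [Module k Q]
    (x y : (N →ₗ[k] N) × (N →ₗ[k] N) × (Q →ₗ[k] Q) × (Q →ₗ[k] Q)) :
    (N →ₗ[k] N) × (N →ₗ[k] N) × (Q →ₗ[k] Q) × (Q →ₗ[k] Q) :=
  (x.1 ∘ₗ y.1 - y.1 ∘ₗ x.1, x.2.1 ∘ₗ y.1 - y.1 ∘ₗ x.2.1,
   x.2.2.1 ∘ₗ y.2.2.1 - y.2.2.1 ∘ₗ x.2.2.1, x.2.2.2 ∘ₗ y.2.2.1 - y.2.2.1 ∘ₗ x.2.2.2)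

/-- The left action `[((σ₁,θ₁),(σ₂,θ₂)),(d,D)] = (σ₁d − dσ₂, θ₁d − dθ₂)`. -/
def actXL {k N Q : Type*} [CommRing k] [AddCommGroup N] [Module k N]
    [AddCommGroup Q] [Module k Q]
    (x : (N →ₗ[k] N) × (N →ₗ[k] N) × (Q →ₗ[k] Q) × (Q →ₗ[k] Q))
    (a : (Q →ₗ[k] N) × (Q →ₗ[k] N)) : (Q →ₗ[k] N) × (Q →ₗ[k] N) :=
  (x.1 ∘ₗ a.1 - a.1 ∘ₗ x.2.2.1, x.2.1 ∘ₗ a.1 - a.1 ∘ₗ x.2.2.2)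

/-- The right action `[(d,D),((σ₁,θ₁),(σ₂,θ₂))] = (dσ₂ − σ₁d, Dσ₂ − σ₁D)`. -/
def actXR {k N Q : Type*} [CommRing k] [AddCommGroup N] [Module k N]
    [AddCommGroup Q] [Module k Q]
    (a : (Q →ₗ[k] N) × (Q →ₗ[k] N))
    (x : (N →ₗ[k] N) × (N →ₗ[k] N) × (Q →ₗ[k] Q) × (Q →ₗ[k] Q)) :
    (Q →ₗ[k] N) × (Q →ₗ[k] N) :=
  (a.1 ∘ₗ x.2.2.1 - x.1 ∘ₗ a.1, a.2 ∘ₗ x.2.2.1 - x.1 ∘ₗ a.2)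

/-- The map `Δ(d,D) = ((d∘μ, D∘μ), (μ∘d, μ∘D))`. -/
def deltaMap {k N Q : Type*} [CommRing k] [AddCommGroup N] [Module k N]
    [AddCommGroup Q] [Module k Q] (mu : N →ₗ[k] Q)
    (a : (Q →ₗ[k] N) × (Q →ₗ[k] N)) :
    (N →ₗ[k] N) × (N →ₗ[k] N) × (Q →ₗ[k] Q) × (Q →ₗ[k] Q) :=
  (a.1 ∘ₗ mu, a.2 ∘ₗ mu, mu ∘ₗ a.1, mu ∘ₗ a.2)

/-- Membership in `Bider(Q,N)` for a pair. -/
def MemQN {k N Q : Type*} [CommRing k] [AddCommGroup N] [Module k N]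
    [AddCommGroup Q] [Module k Q] {LN : LeibnizBracket k N} {LQ : LeibnizBracket k Q}
    (X : LeibnizXMod k N Q LN LQ) (a : (Q →ₗ[k] N) × (Q →ₗ[k] N)) : Prop :=
  IsBiderQN X.act a.1 a.2

/-- Membership in `Bider(N,Q,μ)` for a quadruple. -/
def MemX {k N Q : Type*} [CommRing k] [AddCommGroup N] [Module k N]
    [AddCommGroup Q] [Module k Q] {LN : LeibnizBracket k N} {LQ : LeibnizBracket k Q}
    (X : LeibnizXMod k N Q LN LQ)
    (x : (N →ₗ[k] N) × (N →ₗ[k] N) × (Q →ₗ[k] Q) × (Q →ₗ[k] Q)) : Prop :=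
  IsBiderXMod X x.1 x.2.1 x.2.2.1 x.2.2.2

/-- The semidirect product bracket on `M × P` coming from an action of `P` on `M`. -/
def sdBr {k M P : Type*} [CommRing k] [AddCommGroup M] [Module k M]
    [AddCommGroup P] [Module k P] (LM : LeibnizBracket k M) (LP : LeibnizBracket k P)
    (a : LeibnizAction k P M LP LM) (u v : M × P) : M × P :=
  (LM.br u.1 v.1 + a.pm u.2 v.1 + a.mp u.1 v.2, LP.br u.2 v.2)

/-- for `(d,D) ∈ Bider(Q,N)`, `(d∘μ, D∘μ)` is a biderivation of `N`. -/
theorem biderQN_comp_mu_isBider {k N Q : Type*} [CommRing k] [AddCommGroup N] [Module k N]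
    [AddCommGroup Q] [Module k Q] {LN : LeibnizBracket k N} {LQ : LeibnizBracket k Q}
    (X : LeibnizXMod k N Q LN LQ)
    (d D : Q →ₗ[k] N) (h : IsBiderQN X.act d D) :
    IsBider LN (d ∘ₗ X.mu) (D ∘ₗ X.mu) := by
  obtain ⟨h1, h2, h3⟩ := h
  refine ⟨fun x y => ?_, fun x y => ?_, fun x y => ?_⟩
  · simp only [LinearMap.comp_apply, X.map_br, h1, X.peiffer1, X.peiffer2]
  · simp only [LinearMap.comp_apply, X.map_br, h2, X.peiffer1, X.peiffer2]
  · rw [← X.peiffer1, ← X.peiffer1, LinearMap.comp_apply, LinearMap.comp_apply, h3]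
end

section
/- Let (𝔫,𝔮,μ) be a Leibniz crossed module and (d,D) ∈ Bider(𝔮,𝔫). Then the pair (μ∘d, μ∘D) of k-linear maps 𝔮 → 𝔮 is a biderivation of the Leibniz algebra 𝔮. -/
/-- for `(d,D) ∈ Bider(Q,N)`, `(μ∘d, μ∘D)` is a biderivation of `Q`. -/
theorem mu_comp_biderQN_isBider {k N Q : Type*} [CommRing k] [AddCommGroup N] [Module k N]
    [AddCommGroup Q] [Module k Q] {LN : LeibnizBracket k N} {LQ : LeibnizBracket k Q}
    (X : LeibnizXMod k N Q LN LQ)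
    (d D : Q →ₗ[k] N) (h : IsBiderQN X.act d D) :
    IsBider LQ (X.mu ∘ₗ d) (X.mu ∘ₗ D) := by
  obtain ⟨h1, h2, h3⟩ := h
  refine ⟨fun q q' => ?_, fun q q' => ?_, fun q q' => ?_⟩
  · simp [h1 q q', X.equiv1, X.equiv2]
  · simp [h2 q q', X.equiv2]
  · have := congrArg X.mu (h3 q q')
    simpa [X.equiv1] using this
end

section
/- Let (𝔫,𝔮,μ) be a Leibniz crossed module and (d₁,D₁), (d₂,D₂) ∈ Bider(𝔮,𝔫). Then [D₁(μ(d₂(q))), q'] = [D₁(μ(D₂(q))), q'] and [q, D₁(μ(d₂(q')))] = [q, D₁(μ(D₂(q')))] for all q,q' ∈ 𝔮. -/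
/-- Lemma 3.3. -/
theorem biderQN_bracket_lemma {k N Q : Type*} [CommRing k] [AddCommGroup N] [Module k N]
    [AddCommGroup Q] [Module k Q] {LN : LeibnizBracket k N} {LQ : LeibnizBracket k Q}
    (X : LeibnizXMod k N Q LN LQ)
    (d1 D1 d2 D2 : Q →ₗ[k] N)
    (h1 : IsBiderQN X.act d1 D1) (h2 : IsBiderQN X.act d2 D2) :
    (∀ q q' : Q, X.act.mp (D1 (X.mu (d2 q))) q' = X.act.mp (D1 (X.mu (D2 q))) q') ∧
    (∀ q q' : Q, X.act.pm q (D1 (X.mu (d2 q'))) = X.act.pm q (D1 (X.mu (D2 q')))) := by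
  obtain ⟨hd1, hD1, hdD1⟩ := h1
  obtain ⟨hd2, hD2, hdD2⟩ := h2
  have hpmx : ∀ (p q : Q), X.act.pm p (d2 q - D2 q) = 0 := by
    intro p q; rw [map_sub, hdD2, sub_self]
  have hmux : ∀ (p q : Q), LQ.br p (X.mu (d2 q - D2 q)) = 0 := by
    intro p q; rw [← X.equiv1, hpmx, map_zero]
  have hbrx : ∀ (n : N) (q : Q), LN.br n (d2 q - D2 q) = 0 := by
    intro n q; rw [← X.peiffer1, hpmx]
  constructor
  · intro q q'
    have h := hD1 q' (X.mu (d2 q - D2 q))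
    rw [hmux, map_zero, X.peiffer2, hbrx, zero_sub] at h
    have h0 : X.act.mp (D1 (X.mu (d2 q - D2 q))) q' = 0 := neg_eq_zero.mp h.symm
    rw [← sub_eq_zero]
    have hrw : X.act.mp (D1 (X.mu (d2 q))) q' - X.act.mp (D1 (X.mu (D2 q))) q'
        = X.act.mp (D1 (X.mu (d2 q - D2 q))) q' := by simp [map_sub]
    rw [hrw]; exact h0
  · intro q q'
    have h := hd1 q (X.mu (d2 q' - D2 q'))
    rw [hmux, map_zero, X.peiffer2, hbrx, zero_add] at h
    have h0 : X.act.pm q (D1 (X.mu (d2 q' - D2 q'))) = 0 := by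
      rw [← hdD1]; exact h.symm
    rw [← sub_eq_zero]
    have hrw : X.act.pm q (D1 (X.mu (d2 q'))) - X.act.pm q (D1 (X.mu (D2 q')))
        = X.act.pm q (D1 (X.mu (d2 q' - D2 q'))) := by simp [map_sub]
    rw [hrw]; exact h0
end

section
/- Let (𝔫,𝔮,μ) be a Leibniz crossed module. For all (d₁,D₁), (d₂,D₂) ∈ Bider(𝔮,𝔫), the pair (d₁∘μ∘d₂ − d₂∘μ∘d₁, D₁∘μ∘d₂ − d₂∘μ∘D₁) again belongs to Bider(𝔮,𝔫), and this bracket makes Bider(𝔮,𝔫) a Leibniz algebra, i.e. the Leibniz identity [[x,y],z] = [x,[y,z]] + [[x,z],y] holds for this bracket on Bider(𝔮,𝔫). -/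
/-- the bracket `(d₁μd₂ − d₂μd₁, D₁μd₂ − d₂μD₁)` is closed on `Bider(Q,N)`
and satisfies the Leibniz identity there. -/
theorem biderQN_isLeibniz {k N Q : Type*} [CommRing k] [AddCommGroup N] [Module k N]
    [AddCommGroup Q] [Module k Q] {LN : LeibnizBracket k N} {LQ : LeibnizBracket k Q}
    (X : LeibnizXMod k N Q LN LQ) :
    (∀ a b : (Q →ₗ[k] N) × (Q →ₗ[k] N), MemQN X a → MemQN X b →
      MemQN X (brQN X.mu a b)) ∧
    (∀ a b c : (Q →ₗ[k] N) × (Q →ₗ[k] N), MemQN X a → MemQN X b → MemQN X c →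
      brQN X.mu (brQN X.mu a b) c
        = brQN X.mu a (brQN X.mu b c) + brQN X.mu (brQN X.mu a c) b) := by
  constructor
  · intro a b ha hb
    obtain ⟨ha1, ha2, ha3⟩ := ha
    obtain ⟨hb1, hb2, hb3⟩ := hb
    refine ⟨?_, ?_, ?_⟩
    · intro q q'
      simp only [brQN, LinearMap.sub_apply, LinearMap.comp_apply, hb1, ha1, map_add,
        map_sub, X.equiv1, X.equiv2, X.peiffer1, X.peiffer2, LinearMap.map_add,
        LinearMap.add_apply, LinearMap.map_sub]
      abel
    · intro q q'
      simp only [brQN, LinearMap.sub_apply, LinearMap.comp_apply, hb1, ha2, map_add,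
        map_sub, X.equiv1, X.equiv2, X.peiffer1, X.peiffer2, LinearMap.map_add,
        LinearMap.add_apply, LinearMap.map_sub]
      abel
    · intro q q'
      have key : X.act.pm q (b.1 (X.mu (a.1 q'))) = X.act.pm q (b.1 (X.mu (a.2 q'))) := by
        have hQ : LQ.br q (X.mu (a.1 q')) = LQ.br q (X.mu (a.2 q')) := by
          rw [← X.equiv1, ← X.equiv1, ha3]
        have hN : LN.br (b.1 q) (a.1 q') = LN.br (b.1 q) (a.2 q') := by
          rw [← X.peiffer1, ← X.peiffer1, ha3]
        have e1 := hb1 q (X.mu (a.1 q'))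
        have e2 := hb1 q (X.mu (a.2 q'))
        rw [hQ, e2] at e1
        rw [X.peiffer2, X.peiffer2, hN] at e1
        exact (add_left_cancel e1).symm
      simp only [brQN, LinearMap.sub_apply, LinearMap.comp_apply, map_sub, ha3, key]
  · intro a b c _ _ _
    unfold brQN
    refine Prod.ext ?_ ?_
    all_goals
      ext q
      simp only [LinearMap.sub_comp, LinearMap.comp_sub, LinearMap.comp_assoc,
        Prod.fst_add, Prod.snd_add, LinearMap.add_apply, LinearMap.sub_apply,
        LinearMap.comp_apply, map_sub]
      abel
end

section
/- Let (𝔫,𝔮,μ) be a Leibniz crossed module, let ((σ₁,θ₁),(σ₂,θ₂)), ((σ'₁,θ'₁),(σ'₂,θ'₂)) ∈ Bider(𝔫,𝔮,μ) and (d,D) ∈ Bider(𝔮,𝔫). Then for all n ∈ 𝔫 and q,q' ∈ 𝔮: [D(σ₂(q)),q'] = [D(θ₂(q)),q'], [q,D(σ₂(q'))] = [q,D(θ₂(q'))], [θ₁(d(q)),q'] = [θ₁(D(q)),q'], [q,θ₁(d(q'))] = [q,θ₁(D(q'))], [D(σ₂(q)),n] = [D(θ₂(q)),n], [n,D(σ₂(q))]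 = [n,D(θ₂(q))], [θ₁(d(q)),n] = [θ₁(D(q)),n], [n,θ₁(d(q))] = [n,θ₁(D(q))], [θ₁(σ'₁(n)),q] = [θ₁(θ'₁(n)),q], [q,θ₁(σ'₁(n))] = [q,θ₁(θ'₁(n))], [θ₂(σ'₂(q)),n] = [θ₂(θ'₂(q)),n], and [n,θ₂(σ'₂(q))] = [n,θ₂(θ'₂(q))]. -/
/-- Lemma 3.5: the twelve bracket identities. -/
theorem biderXMod_bracket_lemma {k N Q : Type*} [CommRing k] [AddCommGroup N] [Module k N]
    [AddCommGroup Q] [Module k Q] {LN : LeibnizBracket k N} {LQ : LeibnizBracket k Q}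
    (X : LeibnizXMod k N Q LN LQ)
    (s1 t1 : N →ₗ[k] N) (s2 t2 : Q →ₗ[k] Q)
    (s1' t1' : N →ₗ[k] N) (s2' t2' : Q →ₗ[k] Q)
    (d D : Q →ₗ[k] N)
    (h : IsBiderXMod X s1 t1 s2 t2) (h' : IsBiderXMod X s1' t1' s2' t2')
    (hd : IsBiderQN X.act d D) :
    (∀ q q' : Q, X.act.mp (D (s2 q)) q' = X.act.mp (D (t2 q)) q') ∧
    (∀ q q' : Q, X.act.pm q (D (s2 q')) = X.act.pm q (D (t2 q'))) ∧
    (∀ q q' : Q, X.act.mp (t1 (d q)) q' = X.act.mp (t1 (D q)) q') ∧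
    (∀ q q' : Q, X.act.pm q (t1 (d q')) = X.act.pm q (t1 (D q'))) ∧
    (∀ (q : Q) (n : N), LN.br (D (s2 q)) n = LN.br (D (t2 q)) n) ∧
    (∀ (n : N) (q : Q), LN.br n (D (s2 q)) = LN.br n (D (t2 q))) ∧
    (∀ (q : Q) (n : N), LN.br (t1 (d q)) n = LN.br (t1 (D q)) n) ∧
    (∀ (n : N) (q : Q), LN.br n (t1 (d q)) = LN.br n (t1 (D q))) ∧
    (∀ (n : N) (q : Q), X.act.mp (t1 (s1' n)) q = X.act.mp (t1 (t1' n)) q) ∧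
    (∀ (q : Q) (n : N), X.act.pm q (t1 (s1' n)) = X.act.pm q (t1 (t1' n))) ∧
    (∀ (q : Q) (n : N), X.act.pm (t2 (s2' q)) n = X.act.pm (t2 (t2' q)) n) ∧
    (∀ (n : N) (q : Q), X.act.mp n (t2 (s2' q)) = X.act.mp n (t2 (t2' q))) := by
  obtain ⟨⟨hs1d, ht1d, hst1⟩, ⟨hs2d, ht2d, hst2⟩, hms, hmt, h5, h6, h7, h8, h9, h10⟩ := h
  obtain ⟨⟨hs1d', ht1d', hst1'⟩, ⟨hs2d', ht2d', hst2'⟩, hms', hmt', h5', h6', h7', h8', h9', h10'⟩ := h'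
  obtain ⟨hdd, hDd, hdD⟩ := hd
  -- z := s2 q - t2 q facts
  have hzbr : ∀ x q : Q, LQ.br x (s2 q - t2 q) = 0 := by
    intro x q; rw [map_sub, hst2, sub_self]
  have hzmp : ∀ (n : N) (q : Q), X.act.mp n (s2 q - t2 q) = 0 := by
    intro n q; rw [map_sub, h10, sub_self]
  -- goal 1 core
  have g1 : ∀ q q' : Q, X.act.mp (D (s2 q - t2 q)) q' = 0 := by
    intro q q'
    have e := hDd q' (s2 q - t2 q)
    rw [hzbr, map_zero, hzmp, zero_sub, eq_comm, neg_eq_zero] at e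
    exact e
  -- goal 2 core
  have g2 : ∀ q q' : Q, X.act.pm q (D (s2 q' - t2 q')) = 0 := by
    intro q q'
    rw [← hdD]
    have e := hdd q (s2 q' - t2 q')
    rw [hzbr, map_zero, hzmp, zero_add, eq_comm] at e
    exact e
  -- w := d q - D q facts
  have hwpm : ∀ (x q : Q), X.act.pm x (d q - D q) = 0 := by
    intro x q; rw [map_sub, hdD, sub_self]
  -- goal 3 core
  have g3 : ∀ q q' : Q, X.act.mp (t1 (d q - D q)) q' = 0 := by
    intro q q'
    have e := h7 q' (d q - D q)
    rw [hwpm, map_zero, hwpm, zero_sub, eq_comm, neg_eq_zero] at e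
    exact e
  -- goal 4 core
  have g4 : ∀ q q' : Q, X.act.pm q (t1 (d q' - D q')) = 0 := by
    intro q q'
    rw [← h9]
    have e := h5 q (d q' - D q')
    rw [hwpm, map_zero, hwpm, zero_add, eq_comm] at e
    exact e
  -- u := s1' n - t1' n facts
  have hupm : ∀ (q : Q) (n : N), X.act.pm q (s1' n - t1' n) = 0 := by
    intro q n; rw [map_sub, h9', sub_self]
  -- goal 9 core
  have g9 : ∀ (n : N) (q : Q), X.act.mp (t1 (s1' n - t1' n)) q = 0 := by
    intro n q
    have e := h7 q (s1' n - t1' n)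
    rw [hupm, map_zero, hupm, zero_sub, eq_comm, neg_eq_zero] at e
    exact e
  -- goal 10 core
  have g10 : ∀ (q : Q) (n : N), X.act.pm q (t1 (s1' n - t1' n)) = 0 := by
    intro q n
    rw [← h9]
    have e := h5 q (s1' n - t1' n)
    rw [hupm, map_zero, hupm, zero_add, eq_comm] at e
    exact e
  -- v := s2' q - t2' q facts
  have hvmp : ∀ (n : N) (q : Q), X.act.mp n (s2' q - t2' q) = 0 := by
    intro n q; rw [map_sub, h10', sub_self]
  -- goal 11 core
  have g11 : ∀ (q : Q) (n : N), X.act.pm (t2 (s2' q - t2' q)) n = 0 := by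
    intro q n
    have e := h8 n (s2' q - t2' q)
    rw [hvmp, map_zero, hvmp, zero_sub, eq_comm, neg_eq_zero] at e
    exact e
  -- goal 12 core
  have g12 : ∀ (n : N) (q : Q), X.act.mp n (t2 (s2' q - t2' q)) = 0 := by
    intro n q
    rw [← h10]
    have e := h6 n (s2' q - t2' q)
    rw [hvmp, map_zero, hvmp, zero_add, eq_comm] at e
    exact e
  refine ⟨?_, ?_, ?_, ?_, ?_, ?_, ?_, ?_, ?_, ?_, ?_, ?_⟩
  · intro q q'
    have := g1 q q'
    rwa [map_sub, map_sub, LinearMap.sub_apply, sub_eq_zero] at this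
  · intro q q'
    have := g2 q q'
    rwa [map_sub, map_sub, sub_eq_zero] at this
  · intro q q'
    have := g3 q q'
    rwa [map_sub, map_sub, LinearMap.sub_apply, sub_eq_zero] at this
  · intro q q'
    have := g4 q q'
    rwa [map_sub, map_sub, sub_eq_zero] at this
  · intro q n
    have := g1 q (X.mu n)
    rw [X.peiffer2] at this
    rwa [map_sub, map_sub, LinearMap.sub_apply, sub_eq_zero] at this
  · intro n q
    have := g2 (X.mu n) q
    rw [X.peiffer1] at this
    rwa [map_sub, map_sub, sub_eq_zero] at this
  · intro q n
    have := g3 q (X.mu n)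
    rw [X.peiffer2] at this
    rwa [map_sub, map_sub, LinearMap.sub_apply, sub_eq_zero] at this
  · intro n q
    have := g4 (X.mu n) q
    rw [X.peiffer1] at this
    rwa [map_sub, map_sub, sub_eq_zero] at this
  · intro n q
    have := g9 n q
    rwa [map_sub, map_sub, LinearMap.sub_apply, sub_eq_zero] at this
  · intro q n
    have := g10 q n
    rwa [map_sub, map_sub, sub_eq_zero] at this
  · intro q n
    have := g11 q n
    rwa [map_sub, map_sub, LinearMap.sub_apply, sub_eq_zero] at this
  · intro n q
    have := g12 n q
    rwa [map_sub, map_sub, sub_eq_zero] at this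
end

section
/- Let (𝔫,𝔮,μ) be a Leibniz crossed module. For all ((σ₁,θ₁),(σ₂,θ₂)), ((σ'₁,θ'₁),(σ'₂,θ'₂)) ∈ Bider(𝔫,𝔮,μ), the quadruple ((σ₁σ'₁ − σ'₁σ₁, θ₁σ'₁ − σ'₁θ₁),(σ₂σ'₂ − σ'₂σ₂, θ₂σ'₂ − σ'₂θ₂)) again belongs to Bider(𝔫,𝔮,μ), and this bracket makes Bider(𝔫,𝔮,μ) a Leibniz algebra, i.e. the Leibniz identity [[x,y],z] = [x,[y,z]] + [[x,z],y] holds for this bracket. -/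
/-- Auxiliary: if `br a w = 0` for all `a`, and `h (br a b) = br (f a) b + br a (g b)`,
then `br a (g w) = 0` for all `a`. -/
lemma bider_aux {k A B C : Type*} [CommRing k] [AddCommGroup A] [Module k A]
    [AddCommGroup B] [Module k B] [AddCommGroup C] [Module k C]
    (br : A →ₗ[k] B →ₗ[k] C) (f : A →ₗ[k] A) (g : B →ₗ[k] B) (h : C →ₗ[k] C)
    (hder : ∀ a b, h (br a b) = br (f a) b + br a (g b))
    (w : B) (hw : ∀ a, br a w = 0) : ∀ a, br a (g w) = 0 := by
  intro a
  have hh := hder a w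
  rw [hw a, map_zero, hw (f a)] at hh
  simpa using hh.symm

/-- the componentwise bracket is closed on `Bider(N,Q,μ)` and satisfies
the Leibniz identity there. -/
theorem biderXMod_isLeibniz {k N Q : Type*} [CommRing k] [AddCommGroup N] [Module k N]
    [AddCommGroup Q] [Module k Q] {LN : LeibnizBracket k N} {LQ : LeibnizBracket k Q}
    (X : LeibnizXMod k N Q LN LQ) :
    (∀ x y : (N →ₗ[k] N) × (N →ₗ[k] N) × (Q →ₗ[k] Q) × (Q →ₗ[k] Q),
      MemX X x → MemX X y → MemX X (brX x y)) ∧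
    (∀ x y z : (N →ₗ[k] N) × (N →ₗ[k] N) × (Q →ₗ[k] Q) × (Q →ₗ[k] Q),
      MemX X x → MemX X y → MemX X z →
      brX (brX x y) z = brX x (brX y z) + brX (brX x z) y) := by
  constructor
  · rintro ⟨s1, t1, s2, t2⟩ ⟨s1', t1', s2', t2'⟩ hx hy
    obtain ⟨⟨hd1, hD1, hE1⟩, ⟨hd2, hD2, hE2⟩, hm1, hm2, ha1, ha2, ha3, ha4, ha5, ha6⟩ := hx
    obtain ⟨⟨hd1', hD1', hE1'⟩, ⟨hd2', hD2', hE2'⟩, hm1', hm2', ha1', ha2', ha3', ha4',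
      ha5', ha6'⟩ := hy
    refine ⟨⟨?_, ?_, ?_⟩, ⟨?_, ?_, ?_⟩, ?_, ?_, ?_, ?_, ?_, ?_, ?_, ?_⟩
    · intro x y
      simp only [brX, LinearMap.sub_apply, LinearMap.comp_apply, map_sub, hd1, hd1',
        map_add, LinearMap.add_apply]
      abel
    · intro x y
      simp only [brX, LinearMap.sub_apply, LinearMap.comp_apply, map_sub, hd1', hD1,
        map_add, LinearMap.add_apply]
      abel
    · intro x y
      simp only [brX, LinearMap.sub_apply, LinearMap.comp_apply, map_sub]
      have hw : ∀ a, LN.br a (s1 y - t1 y) = 0 := by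
        intro a; rw [map_sub, hE1]; exact sub_self _
      have key := bider_aux LN.br s1' s1' s1' hd1' (s1 y - t1 y) hw x
      rw [map_sub, map_sub] at key
      rw [hE1 x (s1' y), sub_eq_zero.mp key]
    · intro x y
      simp only [brX, LinearMap.sub_apply, LinearMap.comp_apply, map_sub, hd2, hd2',
        map_add, LinearMap.add_apply]
      abel
    · intro x y
      simp only [brX, LinearMap.sub_apply, LinearMap.comp_apply, map_sub, hd2', hD2,
        map_add, LinearMap.add_apply]
      abel
    · intro x y
      simp only [brX, LinearMap.sub_apply, LinearMap.comp_apply, map_sub]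
      have hw : ∀ a, LQ.br a (s2 y - t2 y) = 0 := by
        intro a; rw [map_sub, hE2]; exact sub_self _
      have key := bider_aux LQ.br s2' s2' s2' hd2' (s2 y - t2 y) hw x
      rw [map_sub, map_sub] at key
      rw [hE2 x (s2' y), sub_eq_zero.mp key]
    · intro n
      simp only [brX, LinearMap.sub_apply, LinearMap.comp_apply, map_sub, hm1, hm1']
    · intro n
      simp only [brX, LinearMap.sub_apply, LinearMap.comp_apply, map_sub, hm1', hm2]
    · intro q n
      simp only [brX, LinearMap.sub_apply, LinearMap.comp_apply, map_sub, ha1, ha1',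
        map_add, LinearMap.add_apply]
      abel
    · intro n q
      simp only [brX, LinearMap.sub_apply, LinearMap.comp_apply, map_sub, ha2, ha2',
        map_add, LinearMap.add_apply]
      abel
    · intro q n
      simp only [brX, LinearMap.sub_apply, LinearMap.comp_apply, map_sub, ha1', ha2',
        ha3, map_add, LinearMap.add_apply]
      abel
    · intro n q
      simp only [brX, LinearMap.sub_apply, LinearMap.comp_apply, map_sub, ha1', ha2',
        ha4, map_add, LinearMap.add_apply]
      abel
    · intro q n
      simp only [brX, LinearMap.sub_apply, LinearMap.comp_apply, map_sub]
      have hw : ∀ a, X.act.pm a (s1 n - t1 n) = 0 := by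
        intro a; rw [map_sub, ha5]; exact sub_self _
      have key := bider_aux X.act.pm s2' s1' s1' ha1' (s1 n - t1 n) hw q
      rw [map_sub, map_sub] at key
      rw [ha5 q (s1' n), sub_eq_zero.mp key]
    · intro n q
      simp only [brX, LinearMap.sub_apply, LinearMap.comp_apply, map_sub]
      have hw : ∀ a, X.act.mp a (s2 q - t2 q) = 0 := by
        intro a; rw [map_sub, ha6]; exact sub_self _
      have key := bider_aux X.act.mp s1' s2' s1' ha2' (s2 q - t2 q) hw n
      rw [map_sub, map_sub] at key
      rw [ha6 n (s2' q), sub_eq_zero.mp key]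
  · intro x y z _ _ _
    simp only [brX, Prod.mk_add_mk, Prod.mk.injEq]
    refine ⟨?_, ?_, ?_, ?_⟩ <;> ext v <;>
      simp only [LinearMap.sub_apply, LinearMap.add_apply, LinearMap.comp_apply,
        map_sub, map_add] <;> abel
end

section
/- Let (𝔫,𝔮,μ) be a Leibniz crossed module. The map Δ: Bider(𝔮,𝔫) → Bider(𝔫,𝔮,μ), (d,D) ↦ ((d∘μ, D∘μ),(μ∘d, μ∘D)), is well defined and is a homomorphism of Leibniz algebras, where Bider(𝔮,𝔫) carries the bracket [(d₁,D₁),(d₂,D₂)] = (d₁μd₂ − d₂μd₁, D₁μd₂ − d₂μD₁) and Bider(𝔫,𝔮,μ) carries the componentwise bracket [((σ₁,θ₁),(σ₂,θ₂)),((σ'₁,θ'₁),(σ'₂,θ'₂))] = ((σ₁σ'₁ − σ'₁σ₁, θ₁σ'₁ − σ'₁θ₁),(σ₂σ'₂ − σ'₂σ₂, θ₂σ'₂ − σ'₂θ₂)). -/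
/-- `Δ : Bider(Q,N) → Bider(N,Q,μ)` is well defined and preserves brackets. -/
theorem deltaMap_isHom {k N Q : Type*} [CommRing k] [AddCommGroup N] [Module k N]
    [AddCommGroup Q] [Module k Q] {LN : LeibnizBracket k N} {LQ : LeibnizBracket k Q}
    (X : LeibnizXMod k N Q LN LQ) :
    (∀ a : (Q →ₗ[k] N) × (Q →ₗ[k] N), MemQN X a → MemX X (deltaMap X.mu a)) ∧
    (∀ a b : (Q →ₗ[k] N) × (Q →ₗ[k] N), MemQN X a → MemQN X b →
      deltaMap X.mu (brQN X.mu a b) = brX (deltaMap X.mu a) (deltaMap X.mu b)) := by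
  constructor
  · rintro ⟨d, D⟩ ⟨h1, h2, h3⟩
    simp only at h1 h2 h3
    refine ⟨⟨?_, ?_, ?_⟩, ⟨?_, ?_, ?_⟩, fun n => rfl, fun n => rfl,
        ?_, ?_, ?_, ?_, ?_, ?_⟩ <;>
      intro x y <;> simp only [deltaMap, LinearMap.comp_apply]
    · rw [X.map_br, h1, X.peiffer1, X.peiffer2]
    · rw [X.map_br, h2, X.peiffer2, X.peiffer2]
    · rw [← X.peiffer1, ← X.peiffer1, h3]
    · rw [h1, map_add, X.equiv2, X.equiv1]
    · rw [h2, map_sub, X.equiv2, X.equiv2]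
    · rw [← X.equiv1, ← X.equiv1, h3]
    · rw [X.equiv1, h1, X.peiffer2, X.peiffer1]
    · rw [X.equiv2, h1, X.peiffer1, X.peiffer2]
    · rw [X.equiv1, h2, X.peiffer2, X.peiffer1]
    · rw [X.equiv2, h2, X.peiffer2, X.peiffer1]
    · exact h3 x (X.mu y)
    · rw [X.peiffer2, X.peiffer2, ← X.peiffer1, ← X.peiffer1, h3]
  · rintro ⟨d1, D1⟩ ⟨d2, D2⟩ _ _
    simp only [deltaMap, brQN, brX]
    refine Prod.ext ?_ (Prod.ext ?_ (Prod.ext ?_ ?_)) <;> ext x <;>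
      simp [LinearMap.comp_apply, LinearMap.sub_apply, map_sub]
end

section
/- Let (𝔫,𝔮,μ) be a Leibniz crossed module, ((σ₁,θ₁),(σ₂,θ₂)) ∈ Bider(𝔫,𝔮,μ) and (d,D) ∈ Bider(𝔮,𝔫). Then both pairs (σ₁∘d − d∘σ₂, θ₁∘d − d∘θ₂) and (d∘σ₂ − σ₁∘d, D∘σ₂ − σ₁∘D) belong to Bider(𝔮,𝔫). -/
/-- the two pairs obtained by acting with a biderivation of the crossed
module on an element of `Bider(Q,N)` again belong to `Bider(Q,N)`. -/
theorem actX_mem_biderQN {k N Q : Type*} [CommRing k] [AddCommGroup N] [Module k N]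
    [AddCommGroup Q] [Module k Q] {LN : LeibnizBracket k N} {LQ : LeibnizBracket k Q}
    (X : LeibnizXMod k N Q LN LQ)
    (s1 t1 : N →ₗ[k] N) (s2 t2 : Q →ₗ[k] Q) (d D : Q →ₗ[k] N)
    (hx : IsBiderXMod X s1 t1 s2 t2) (hd : IsBiderQN X.act d D) :
    IsBiderQN X.act (s1 ∘ₗ d - d ∘ₗ s2) (t1 ∘ₗ d - d ∘ₗ t2) ∧
    IsBiderQN X.act (d ∘ₗ s2 - s1 ∘ₗ d) (D ∘ₗ s2 - s1 ∘ₗ D) := by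
  obtain ⟨⟨hs1, ht1, hst1⟩, ⟨hs2, ht2, hst2⟩, h3, h4, h5, h6, h7, h8, h9, h10⟩ := hx
  obtain ⟨hd1, hd2, hd3⟩ := hd
  have key : ∀ q x, X.act.pm q (d x) = d (LQ.br q x) - X.act.mp (d q) x := by
    intro q x; rw [hd1 q x]; abel
  have key2 : ∀ q m, X.act.pm q (s1 m) = s1 (X.act.pm q m) - X.act.pm (s2 q) m := by
    intro q m; rw [h5 q m]; abel
  refine ⟨⟨?_, ?_, ?_⟩, ?_, ?_, ?_⟩
  · intro q q'
    simp only [LinearMap.sub_apply, LinearMap.comp_apply, hd1, hs2, h5, h6, map_add,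
      map_sub, LinearMap.add_apply]
    abel
  · intro q q'
    simp only [LinearMap.sub_apply, LinearMap.comp_apply, hd1, hd2, ht2, h7, h8, map_add,
      map_sub, LinearMap.add_apply]
    abel
  · intro q q'
    simp only [LinearMap.sub_apply, LinearMap.comp_apply, map_sub]
    rw [h9 q (d q'), key q (s2 q'), key q (t2 q'), hst2 q q', h10 (d q) q']
  · intro q q'
    simp only [LinearMap.sub_apply, LinearMap.comp_apply, hd1, hs2, h5, h6, map_add,
      map_sub, LinearMap.add_apply]
    abel
  · intro q q'
    simp only [LinearMap.sub_apply, LinearMap.comp_apply, hd2, hs2, h5, h6, map_add,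
      map_sub, LinearMap.add_apply]
    abel
  · intro q q'
    simp only [LinearMap.sub_apply, LinearMap.comp_apply, map_sub]
    rw [key2 q (d q'), key2 q (D q'), hd3 q (s2 q'), hd3 q q', hd3 (s2 q) q']
end

section
/- Let (𝔫,𝔮,μ) be a Leibniz crossed module. The maps [((σ₁,θ₁),(σ₂,θ₂)),(d,D)] = (σ₁d − dσ₂, θ₁d − dθ₂) and [(d,D),((σ₁,θ₁),(σ₂,θ₂))] = (dσ₂ − σ₁d, Dσ₂ − σ₁D) define an action of the Leibniz algebra Bider(𝔫,𝔮,μ) on the Leibniz algebra Bider(𝔮,𝔫) (i.e. the six Leibniz action identities hold with respect to the bracket [(d₁,D₁),(d₂,D₂)] = (d₁μd₂ − d₂μd₁, D₁μd₂ − d₂μD₁) on Bider(𝔮,𝔫) and the componentwise bracket on Bider(𝔫,𝔮,μ)), and the homomorphism Δ: (d,D) ↦ ((dμ,Dμ),(μd,μD)) together with this action satisfies the equivariance identities Δ([x,(d,D)]) = [x,Δ(d,D)], Δ([(d,D),x]) = [Δ(d,D),x] and the Peiffer identities [Δ(d,D),(d',D')] = [(d,D),(d',D')] = [(d,D),Δ(d',D')];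 that is, (Bider(𝔮,𝔫), Bider(𝔫,𝔮,μ), Δ) is a Leibniz crossed module. -/
/-- Theorem 3.8: `Bider(N,Q,μ)` acts on `Bider(Q,N)` via `actXL`/`actXR`,
and `Δ` with this action is a Leibniz crossed module. -/
theorem actorXMod_isXMod {k N Q : Type*} [CommRing k] [AddCommGroup N] [Module k N]
    [AddCommGroup Q] [Module k Q] {LN : LeibnizBracket k N} {LQ : LeibnizBracket k Q}
    (X : LeibnizXMod k N Q LN LQ) :
    -- the action maps land in Bider(Q,N)
    (∀ (x : (N →ₗ[k] N) × (N →ₗ[k] N) × (Q →ₗ[k] Q) × (Q →ₗ[k] Q))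
       (a : (Q →ₗ[k] N) × (Q →ₗ[k] N)), MemX X x → MemQN X a →
      MemQN X (actXL x a) ∧ MemQN X (actXR a x)) ∧
    -- the six Leibniz action identities
    (∀ x a b, MemX X x → MemQN X a → MemQN X b →
      actXL x (brQN X.mu a b) = brQN X.mu (actXL x a) b - brQN X.mu (actXL x b) a) ∧
    (∀ a x b, MemQN X a → MemX X x → MemQN X b →
      brQN X.mu a (actXL x b) = brQN X.mu (actXR a x) b - actXR (brQN X.mu a b) x) ∧
    (∀ a b x, MemQN X a → MemQN X b → MemX X x →
      brQN X.mu a (actXR b x) = actXR (brQN X.mu a b) x - brQN X.mu (actXR a x) b) ∧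
    (∀ a x y, MemQN X a → MemX X x → MemX X y →
      actXR a (brX x y) = actXR (actXR a x) y - actXR (actXR a y) x) ∧
    (∀ x a y, MemX X x → MemQN X a → MemX X y →
      actXL x (actXR a y) = actXR (actXL x a) y - actXL (brX x y) a) ∧
    (∀ x y a, MemX X x → MemX X y → MemQN X a →
      actXL x (actXL y a) = actXL (brX x y) a - actXR (actXL x a) y) ∧
    -- equivariance of Δ
    (∀ x a, MemX X x → MemQN X a →
      deltaMap X.mu (actXL x a) = brX x (deltaMap X.mu a)) ∧
    (∀ a x, MemQN X a → MemX X x →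
      deltaMap X.mu (actXR a x) = brX (deltaMap X.mu a) x) ∧
    -- Peiffer identities for Δ
    (∀ a b, MemQN X a → MemQN X b → actXL (deltaMap X.mu a) b = brQN X.mu a b) ∧
    (∀ a b, MemQN X a → MemQN X b → actXR a (deltaMap X.mu b) = brQN X.mu a b) := by

  refine ⟨?_, ?_, ?_, ?_, ?_, ?_, ?_, ?_, ?_, ?_, ?_⟩
  · -- membership
    rintro x a ⟨⟨n1, n2, n3⟩, ⟨q1, q2, q3⟩, c1, c2, p1, p2, p3, p4, p5, p6⟩ ⟨h1, h2, h3⟩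
    constructor
    · refine ⟨?_, ?_, ?_⟩
      · intro q q'
        simp only [actXL, LinearMap.sub_apply, LinearMap.comp_apply]
        simp only [h1, q1, p1, p2, map_add, map_sub, LinearMap.sub_apply,
          LinearMap.add_apply]
        abel
      · intro q q'
        simp only [actXL, LinearMap.sub_apply, LinearMap.comp_apply]
        simp only [h1, q2, p3, p4, map_add, map_sub, LinearMap.sub_apply,
          LinearMap.add_apply]
        abel
      · intro q q'
        simp only [actXL, LinearMap.sub_apply, LinearMap.comp_apply, map_sub]
        have key : X.act.pm q (a.1 (x.2.2.1 q')) = X.act.pm q (a.1 (x.2.2.2 q')) := by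
          have e1 := h1 q (x.2.2.1 q')
          have e2 := h1 q (x.2.2.2 q')
          rw [q3 q q', p6 (a.1 q) q'] at e1
          exact add_left_cancel (e1.symm.trans e2)
        rw [p5, key]
    · refine ⟨?_, ?_, ?_⟩
      · intro q q'
        simp only [actXR, LinearMap.sub_apply, LinearMap.comp_apply]
        simp only [h1, q1, p1, p2, map_add, map_sub, LinearMap.sub_apply,
          LinearMap.add_apply]
        abel
      · intro q q'
        simp only [actXR, LinearMap.sub_apply, LinearMap.comp_apply]
        simp only [h2, q1, p2, map_add, map_sub, LinearMap.sub_apply,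
          LinearMap.add_apply]
        abel
      · intro q q'
        simp only [actXR, LinearMap.sub_apply, LinearMap.comp_apply, map_sub]
        have key : X.act.pm q (x.1 (a.1 q')) = X.act.pm q (x.1 (a.2 q')) := by
          have e1 := p1 q (a.1 q')
          have e2 := p1 q (a.2 q')
          rw [h3 q q', h3 (x.2.2.1 q) q'] at e1
          exact add_left_cancel (e1.symm.trans e2)
        rw [h3, key]
  · -- act identity 1
    rintro x a b ⟨-, -, c1, c2, -⟩ - -
    refine Prod.ext ?_ ?_ <;> ext q <;>
      simp only [actXL, brQN, Prod.fst_sub, Prod.snd_sub, LinearMap.sub_apply,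
        LinearMap.comp_apply, map_sub, c1, c2] <;> abel
  · -- act identity 2
    rintro a x b - ⟨-, -, c1, c2, -⟩ -
    refine Prod.ext ?_ ?_ <;> ext q <;>
      simp only [actXL, actXR, brQN, Prod.fst_sub, Prod.snd_sub, LinearMap.sub_apply,
        LinearMap.comp_apply, map_sub, c1, c2] <;> abel
  · -- act identity 3
    rintro a b x - - ⟨-, -, c1, c2, -⟩
    refine Prod.ext ?_ ?_ <;> ext q <;>
      simp only [actXR, brQN, Prod.fst_sub, Prod.snd_sub, LinearMap.sub_apply,
        LinearMap.comp_apply, map_sub, c1, c2] <;> abel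
  · -- act identity 4
    rintro a x y - ⟨-, -, cx1, cx2, -⟩ ⟨-, -, cy1, cy2, -⟩
    refine Prod.ext ?_ ?_ <;> ext q <;>
      simp only [actXR, brX, Prod.fst_sub, Prod.snd_sub, LinearMap.sub_apply,
        LinearMap.comp_apply, map_sub, cx1, cx2, cy1, cy2] <;> abel
  · -- act identity 5
    rintro x a y ⟨-, -, cx1, cx2, -⟩ - ⟨-, -, cy1, cy2, -⟩
    refine Prod.ext ?_ ?_ <;> ext q <;>
      simp only [actXL, actXR, brX, Prod.fst_sub, Prod.snd_sub, LinearMap.sub_apply,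
        LinearMap.comp_apply, map_sub, cx1, cx2, cy1, cy2] <;> abel
  · -- act identity 6
    rintro x y a ⟨-, -, cx1, cx2, -⟩ ⟨-, -, cy1, cy2, -⟩ -
    refine Prod.ext ?_ ?_ <;> ext q <;>
      simp only [actXL, actXR, brX, Prod.fst_sub, Prod.snd_sub, LinearMap.sub_apply,
        LinearMap.comp_apply, map_sub, cx1, cx2, cy1, cy2] <;> abel
  · -- equivariance 1
    rintro x a ⟨-, -, c1, c2, -⟩ -
    refine Prod.ext ?_ (Prod.ext ?_ (Prod.ext ?_ ?_)) <;> ext q <;>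
      simp only [actXL, brX, deltaMap, Prod.fst_sub, Prod.snd_sub, LinearMap.sub_apply,
        LinearMap.comp_apply, map_sub, c1, c2] <;> abel
  · -- equivariance 2
    rintro a x - ⟨-, -, c1, c2, -⟩
    refine Prod.ext ?_ (Prod.ext ?_ (Prod.ext ?_ ?_)) <;> ext q <;>
      simp only [actXR, brX, deltaMap, Prod.fst_sub, Prod.snd_sub, LinearMap.sub_apply,
        LinearMap.comp_apply, map_sub, c1, c2] <;> abel
  · -- Peiffer 1
    rintro a b - -
    refine Prod.ext ?_ ?_ <;> ext q <;>
      simp only [actXL, brQN, deltaMap, Prod.fst_sub, Prod.snd_sub, LinearMap.sub_apply,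
        LinearMap.comp_apply, map_sub] <;> abel
  · -- Peiffer 2
    rintro a b - -
    refine Prod.ext ?_ ?_ <;> ext q <;>
      simp only [actXR, brQN, deltaMap, Prod.fst_sub, Prod.snd_sub, LinearMap.sub_apply,
        LinearMap.comp_apply, map_sub] <;> abel
end

section
/- Let 𝔮 be a Leibniz algebra over a commutative ring k and (σ,θ), (σ',θ') ∈ Bider(𝔮). If Ann(𝔮) = 0 or [𝔮,𝔮] = 𝔮, then θ(σ'(q)) = θ(θ'(q)) for all q ∈ 𝔮. -/
/-- Lemma 4.2 (i): if `Ann(Q) = 0` or `[Q,Q] = Q`, then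
`θ∘σ' = θ∘θ'` for biderivations `(σ,θ), (σ',θ')` of `Q`. -/
theorem bider_theta_sigma_eq {k Q : Type*} [CommRing k] [AddCommGroup Q] [Module k Q]
    (LQ : LeibnizBracket k Q) (s t s' t' : Q →ₗ[k] Q)
    (h : IsBider LQ s t) (h' : IsBider LQ s' t')
    (hcond : (∀ x : Q, (∀ y : Q, LQ.br x y = 0 ∧ LQ.br y x = 0) → x = 0) ∨
      Submodule.span k {z : Q | ∃ x y : Q, LQ.br x y = z} = ⊤) :
    ∀ q : Q, t (s' q) = t (t' q) := by
  obtain ⟨hs, ht, hst⟩ := h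
  obtain ⟨hs', ht', hst'⟩ := h'
  have hzero : ∀ x y : Q, LQ.br x (s' y - t' y) = 0 := by
    intro x y
    simp [map_sub, hst' x y]
  have h1 : ∀ x y : Q, LQ.br (t (s' y)) x = LQ.br (t (t' y)) x := by
    intro x y
    have e := ht x (s' y - t' y)
    rw [hzero x y, map_zero] at e
    simp only [map_sub, LinearMap.sub_apply] at e
    rw [hst' (t x) y, sub_self, zero_sub] at e
    exact sub_eq_zero.mp (neg_eq_zero.mp e.symm)
  intro q
  rcases hcond with hann | hspan
  · have h2 : ∀ x y : Q, LQ.br x (t (s' y)) = LQ.br x (t (t' y)) := by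
      intro x y
      have e := hs x (s' y - t' y)
      rw [hzero x y, map_zero] at e
      simp only [map_sub, LinearMap.sub_apply] at e
      rw [hst' (s x) y, sub_self, zero_add, hst x (s' y), hst x (t' y)] at e
      exact sub_eq_zero.mp e.symm
    have key := hann (t (s' q) - t (t' q)) ?_
    · exact sub_eq_zero.mp key
    · intro y
      constructor
      · simp [map_sub, LinearMap.sub_apply, h1 y q]
      · simp [map_sub, h2 y q]
  · set f : Q →ₗ[k] Q := t ∘ₗ (s' - t') with hf
    have hker : Submodule.span k {z : Q | ∃ x y : Q, LQ.br x y = z} ≤ LinearMap.ker f := by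
      rw [Submodule.span_le]
      rintro z ⟨x, y, rfl⟩
      simp only [SetLike.mem_coe, LinearMap.mem_ker, hf, LinearMap.comp_apply,
        LinearMap.sub_apply, map_sub]
      rw [hs' x y, ht' x y, map_add, map_sub, ht (s' x) y, ht x (s' y), ht (t' x) y,
        ht (t' y) x, hst' (t y) x, hst' (t x) y, h1 y x, h1 x y]
      abel
    have hq : f q = 0 := hker (hspan ▸ Submodule.mem_top)
    simp only [hf, LinearMap.comp_apply, LinearMap.sub_apply, map_sub] at hq
    exact sub_eq_zero.mp hq
end

section
/- Let (𝔫,𝔮,μ) be a Leibniz crossed module, ((σ₁,θ₁),(σ₂,θ₂)) ∈ Bider(𝔫,𝔮,μ) and (d,D) ∈ Bider(𝔮,𝔫). If Ann(𝔫) = 0 or [𝔮,𝔮] = 𝔮, then D(σ₂(q)) = D(θ₂(q)) and θ₁(d(q)) = θ₁(D(q)) for all q ∈ 𝔮. -/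
/-- Lemma 4.2 (ii): if `Ann(N) = 0` or `[Q,Q] = Q`, then
`D∘σ₂ = D∘θ₂` and `θ₁∘d = θ₁∘D`. -/
theorem biderXMod_eq_of_ann_or_perfect {k N Q : Type*} [CommRing k] [AddCommGroup N] [Module k N]
    [AddCommGroup Q] [Module k Q] {LN : LeibnizBracket k N} {LQ : LeibnizBracket k Q}
    (X : LeibnizXMod k N Q LN LQ)
    (s1 t1 : N →ₗ[k] N) (s2 t2 : Q →ₗ[k] Q) (d D : Q →ₗ[k] N)
    (hx : IsBiderXMod X s1 t1 s2 t2) (hd : IsBiderQN X.act d D)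
    (hcond : (∀ x : N, (∀ y : N, LN.br x y = 0 ∧ LN.br y x = 0) → x = 0) ∨
      Submodule.span k {z : Q | ∃ q q' : Q, LQ.br q q' = z} = ⊤) :
    ∀ q : Q, D (s2 q) = D (t2 q) ∧ t1 (d q) = t1 (D q) := by
  obtain ⟨⟨hs1, ht1, hst1⟩, ⟨hs2, ht2, hst2⟩, hmus, hmut, hspm, hsmp, htpm, htmp, hpmst, hmpst⟩ := hx
  obtain ⟨hd1, hD2, hdD3⟩ := hd
  -- (A)
  have hA : ∀ q q', X.act.mp (D (s2 q)) q' = X.act.mp (D (t2 q)) q' := by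
    intro q q'
    have h1 := hD2 q' (s2 q)
    have h2 := hD2 q' (t2 q)
    rw [hst2 q' q, h2, hmpst (D q') q] at h1
    exact (sub_right_injective h1).symm
  -- (B)
  have hB : ∀ q' q, X.act.pm q' (D (s2 q)) = X.act.pm q' (D (t2 q)) := by
    intro q' q
    have h1 := hd1 q' (s2 q)
    have h2 := hd1 q' (t2 q)
    rw [hst2 q' q, h2, hmpst (d q') q] at h1
    have h3 := add_left_cancel h1
    rw [hdD3 q' (s2 q), hdD3 q' (t2 q)] at h3
    exact h3.symm
  -- (C)
  have hC : ∀ q q', X.act.mp (t1 (d q)) q' = X.act.mp (t1 (D q)) q' := by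
    intro q q'
    have h1 := htpm q' (d q)
    have h2 := htpm q' (D q)
    rw [hdD3 q' q, h2, hdD3 (t2 q') q] at h1
    exact (sub_right_injective h1).symm
  -- (D)
  have hD' : ∀ x q, X.act.pm x (t1 (d q)) = X.act.pm x (t1 (D q)) := by
    intro x q
    have h1 := congrArg s1 (hdD3 x q)
    rw [hspm x (d q), hspm x (D q), hdD3 (s2 x) q] at h1
    have h3 := add_left_cancel h1
    rw [hpmst x (d q), hpmst x (D q)] at h3
    exact h3
  rcases hcond with hann | hspan
  · intro q
    constructor
    · have h0 : D (s2 q) - D (t2 q) = 0 := by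
        apply hann
        intro y
        constructor
        · calc LN.br (D (s2 q) - D (t2 q)) y
              = LN.br (D (s2 q)) y - LN.br (D (t2 q)) y := by
                rw [map_sub, LinearMap.sub_apply]
            _ = X.act.mp (D (s2 q)) (X.mu y) - X.act.mp (D (t2 q)) (X.mu y) := by
                rw [X.peiffer2, X.peiffer2]
            _ = 0 := by rw [hA q (X.mu y), sub_self]
        · calc LN.br y (D (s2 q) - D (t2 q))
              = LN.br y (D (s2 q)) - LN.br y (D (t2 q)) := by rw [map_sub]
            _ = X.act.pm (X.mu y) (D (s2 q)) - X.act.pm (X.mu y) (D (t2 q)) := by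
                rw [X.peiffer1, X.peiffer1]
            _ = 0 := by rw [hB (X.mu y) q, sub_self]
      exact sub_eq_zero.mp h0
    · have h0 : t1 (d q) - t1 (D q) = 0 := by
        apply hann
        intro y
        constructor
        · calc LN.br (t1 (d q) - t1 (D q)) y
              = LN.br (t1 (d q)) y - LN.br (t1 (D q)) y := by
                rw [map_sub, LinearMap.sub_apply]
            _ = X.act.mp (t1 (d q)) (X.mu y) - X.act.mp (t1 (D q)) (X.mu y) := by
                rw [X.peiffer2, X.peiffer2]
            _ = 0 := by rw [hC q (X.mu y), sub_self]
        · calc LN.br y (t1 (d q) - t1 (D q))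
              = LN.br y (t1 (d q)) - LN.br y (t1 (D q)) := by rw [map_sub]
            _ = X.act.pm (X.mu y) (t1 (d q)) - X.act.pm (X.mu y) (t1 (D q)) := by
                rw [X.peiffer1, X.peiffer1]
            _ = 0 := by rw [hD' (X.mu y) q, sub_self]
      exact sub_eq_zero.mp h0
  · set E : Q →ₗ[k] N := D ∘ₗ s2 - D ∘ₗ t2 with hE
    set F : Q →ₗ[k] N := t1 ∘ₗ d - t1 ∘ₗ D with hF
    have hES : ∀ z ∈ {z : Q | ∃ q q' : Q, LQ.br q q' = z}, E z = 0 := by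
      rintro z ⟨q, q', rfl⟩
      simp only [hE, LinearMap.sub_apply, LinearMap.comp_apply]
      rw [hs2 q q', ht2 q q', map_add, map_sub, hD2, hD2, hD2, hD2,
        hA q q', hA q' q, hmpst (D q') q, hmpst (D q) q']
      abel
    have hFS : ∀ z ∈ {z : Q | ∃ q q' : Q, LQ.br q q' = z}, F z = 0 := by
      rintro z ⟨q, q', rfl⟩
      simp only [hF, LinearMap.sub_apply, LinearMap.comp_apply]
      rw [hd1 q q', hD2 q q', map_add, map_sub,
        htmp (d q) q', htpm q (d q'), htmp (D q) q', htmp (D q') q,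
        hC q q', hC q' q, hdD3 (t2 q') q, hdD3 (t2 q) q']
      abel
    have hEker : ∀ q : Q, E q = 0 := by
      intro q
      have h1 : Submodule.span k {z : Q | ∃ q q' : Q, LQ.br q q' = z} ≤ LinearMap.ker E :=
        Submodule.span_le.mpr fun z hz => LinearMap.mem_ker.mpr (hES z hz)
      exact LinearMap.mem_ker.mp (h1 (hspan ▸ Submodule.mem_top))
    have hFker : ∀ q : Q, F q = 0 := by
      intro q
      have h1 : Submodule.span k {z : Q | ∃ q q' : Q, LQ.br q q' = z} ≤ LinearMap.ker F :=
        Submodule.span_le.mpr fun z hz => LinearMap.mem_ker.mpr (hFS z hz)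
      exact LinearMap.mem_ker.mp (h1 (hspan ▸ Submodule.mem_top))
    intro q
    constructor
    · have := hEker q
      simp only [hE, LinearMap.sub_apply, LinearMap.comp_apply, sub_eq_zero] at this
      exact this
    · have := hFker q
      simp only [hF, LinearMap.sub_apply, LinearMap.comp_apply, sub_eq_zero] at this
      exact this
end

section
/- Let (𝔪,𝔭,η) and (𝔫,𝔮,μ) be Leibniz crossed modules equipped with compatible action data, i.e. actions of 𝔭 on 𝔫 and on 𝔮 such that μ([p,n]) = [p,μ(n)], μ([n,p]) = [μ(n),p], [n,[p,q]] = [[n,p],q] − [[n,q],p], [p,[n,q]] = [[p,n],q] − [[p,q],n], [p,[q,n]] = [[p,q],n] − [[p,n],q], [n,[q,p]] = [[n,q],p] − [[n,p],q], [q,[n,p]] = [[q,n],p] − [[q,p],n], [q,[p,n]] = [[q,p],n] − [[q,n],p], with 𝔪 acting on 𝔫 and 𝔮 via η (so [m,n] := [η(m),n], [n,m] := [n,η(m)], [m,q] := [η(m),q], [q,m] := [q,η(m)]), and bilinear maps ξ₁: 𝔪×𝔮 → 𝔫, ξ₂: 𝔮×𝔪 → 𝔫 satisfying μ(ξ₂(q,m))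 = [q,m], μ(ξ₁(m,q)) = [m,q], ξ₂(μ(n),m) = [n,m], ξ₁(m,μ(n)) = [m,n], ξ₂(q,[p,m]) = ξ₂([q,p],m) − [ξ₂(q,m),p], ξ₁([p,m],q) = ξ₂([p,q],m) − [p,ξ₂(q,m)], ξ₂(q,[m,p]) = [ξ₂(q,m),p] − ξ₂([q,p],m), ξ₁([m,p],q) = [ξ₁(m,q),p] − ξ₁(m,[q,p]), ξ₂(q,[m,m']) = [ξ₂(q,m),m'] − [ξ₂(q,m'),m], ξ₁([m,m'],q) = [ξ₁(m,q),m'] − [m,ξ₂(q,m')], ξ₂([q,q'],m) = [ξ₂(q,m),q'] + [q,ξ₂(q',m)], ξ₁(m,[q,q']) = [ξ₁(m,q),q'] − [ξ₁(m,q'),q], [q,ξ₁(m,q')] = −[q,ξ₂(q',m)], ξ₁(m,[p,q]) = −ξ₁(m,[q,p]), and [p,ξ₁(m,q)] = −[p,ξ₂(q,m)]. Then for each m ∈ 𝔪 the pair (d_m, D_m) with d_m(q) = −ξ₂(q,m) and D_m(q) = ξ₁(m,q) belongs to Bider(𝔮,𝔫), and the map φ: m ↦ (d_m, D_m) preserves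 brackets: d_{[m,m']} = d_m∘μ∘d_{m'} − d_{m'}∘μ∘d_m and D_{[m,m']} = D_m∘μ∘d_{m'} − d_{m'}∘μ∘D_m for all m,m' ∈ 𝔪. -/
/-- Compatible action data of a Leibniz crossed module `Y = (M,P,η)` on `X = (N,Q,μ)`:
actions of `P` on `N` and `Q` (with `M` acting via `η = Y.mu`) together with the
bilinear maps `ξ₁ : M × Q → N` and `ξ₂ : Q × M → N` subject to the equations
(LbEQ), (LbCOM) and (LbM) of the main construction. -/
structure CompatData {k M P N Q : Type*} [CommRing k]
    [AddCommGroup M] [Module k M] [AddCommGroup P] [Module k P]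
    [AddCommGroup N] [Module k N] [AddCommGroup Q] [Module k Q]
    {LM : LeibnizBracket k M} {LP : LeibnizBracket k P}
    {LN : LeibnizBracket k N} {LQ : LeibnizBracket k Q}
    (Y : LeibnizXMod k M P LM LP) (X : LeibnizXMod k N Q LN LQ) where
  aPN : LeibnizAction k P N LP LN
  aPQ : LeibnizAction k P Q LP LQ
  xi1 : M →ₗ[k] Q →ₗ[k] N
  xi2 : Q →ₗ[k] M →ₗ[k] N
  eq1 : ∀ p n, X.mu (aPN.pm p n) = aPQ.pm p (X.mu n)
  eq2 : ∀ n p, X.mu (aPN.mp n p) = aPQ.mp (X.mu n) p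
  com1 : ∀ n p q, X.act.mp n (aPQ.pm p q) = X.act.mp (aPN.mp n p) q - aPN.mp (X.act.mp n q) p
  com2 : ∀ p n q, aPN.pm p (X.act.mp n q) = X.act.mp (aPN.pm p n) q - X.act.pm (aPQ.pm p q) n
  com3 : ∀ p q n, aPN.pm p (X.act.pm q n) = X.act.pm (aPQ.pm p q) n - X.act.mp (aPN.pm p n) q
  com4 : ∀ n q p, X.act.mp n (aPQ.mp q p) = aPN.mp (X.act.mp n q) p - X.act.mp (aPN.mp n p) q
  com5 : ∀ q n p, X.act.pm q (aPN.mp n p) = aPN.mp (X.act.pm q n) p - X.act.pm (aPQ.mp q p) n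
  com6 : ∀ q p n, X.act.pm q (aPN.pm p n) = X.act.pm (aPQ.mp q p) n - aPN.mp (X.act.pm q n) p
  m1a : ∀ q m, X.mu (xi2 q m) = aPQ.mp q (Y.mu m)
  m1b : ∀ m q, X.mu (xi1 m q) = aPQ.pm (Y.mu m) q
  m2a : ∀ n m, xi2 (X.mu n) m = aPN.mp n (Y.mu m)
  m2b : ∀ m n, xi1 m (X.mu n) = aPN.pm (Y.mu m) n
  m3a : ∀ q p m, xi2 q (Y.act.pm p m) = xi2 (aPQ.mp q p) m - aPN.mp (xi2 q m) p
  m3b : ∀ p m q, xi1 (Y.act.pm p m) q = xi2 (aPQ.pm p q) m - aPN.pm p (xi2 q m)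
  m3c : ∀ q m p, xi2 q (Y.act.mp m p) = aPN.mp (xi2 q m) p - xi2 (aPQ.mp q p) m
  m3d : ∀ m p q, xi1 (Y.act.mp m p) q = aPN.mp (xi1 m q) p - xi1 m (aPQ.mp q p)
  m4a : ∀ q m m', xi2 q (LM.br m m') = aPN.mp (xi2 q m) (Y.mu m') - aPN.mp (xi2 q m') (Y.mu m)
  m4b : ∀ m m' q, xi1 (LM.br m m') q = aPN.mp (xi1 m q) (Y.mu m') - aPN.pm (Y.mu m) (xi2 q m')
  m5a : ∀ q q' m, xi2 (LQ.br q q') m = X.act.mp (xi2 q m) q' + X.act.pm q (xi2 q' m)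
  m5b : ∀ m q q', xi1 m (LQ.br q q') = X.act.mp (xi1 m q) q' - X.act.mp (xi1 m q') q
  m5c : ∀ q m q', X.act.pm q (xi1 m q') = - X.act.pm q (xi2 q' m)
  m6a : ∀ m p q, xi1 m (aPQ.pm p q) = - xi1 m (aPQ.mp q p)
  m6b : ∀ p m q, aPN.pm p (xi1 m q) = - aPN.pm p (xi2 q m)

variable {k M P N Q : Type*} [CommRing k]
    [AddCommGroup M] [Module k M] [AddCommGroup P] [Module k P]
    [AddCommGroup N] [Module k N] [AddCommGroup Q] [Module k Q]
    {LM : LeibnizBracket k M} {LP : LeibnizBracket k P}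
    {LN : LeibnizBracket k N} {LQ : LeibnizBracket k Q}
    {Y : LeibnizXMod k M P LM LP} {X : LeibnizXMod k N Q LN LQ}

/-- `φ(m) = (d_m, D_m)` where `d_m(q) = −ξ₂(q,m)` and `D_m(q) = ξ₁(m,q)`. -/
def phiMap (C : CompatData Y X) (m : M) : (Q →ₗ[k] N) × (Q →ₗ[k] N) :=
  (-(C.xi2.flip m), C.xi1 m)

/-- `ψ(p) = ((σ₁^p,θ₁^p),(σ₂^p,θ₂^p))` with `σ₁^p(n) = −[n,p]`, `θ₁^p(n) = [p,n]`,
`σ₂^p(q) = −[q,p]`, `θ₂^p(q) = [p,q]`. -/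
def psiMap (C : CompatData Y X) (p : P) :
    (N →ₗ[k] N) × (N →ₗ[k] N) × (Q →ₗ[k] Q) × (Q →ₗ[k] Q) :=
  (-(C.aPN.mp.flip p), C.aPN.pm p, -(C.aPQ.mp.flip p), C.aPQ.pm p)

/-- The semidirect product bracket on `N × M` (with `M` acting on `N` via `η = Y.mu`). -/
def brNM (C : CompatData Y X) (u v : N × M) : N × M :=
  (LN.br u.1 v.1 + C.aPN.pm (Y.mu u.2) v.1 + C.aPN.mp u.1 (Y.mu v.2), LM.br u.2 v.2)

/-- The semidirect product bracket on `Q × P`. -/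
def brQP (C : CompatData Y X) (u v : Q × P) : Q × P :=
  (LQ.br u.1 v.1 + C.aPQ.pm u.2 v.1 + C.aPQ.mp u.1 v.2, LP.br u.2 v.2)

/-- The left action `[(q,p),(n,m)] = ([q,n] + [p,n] + ξ₂(q,m), [p,m])` of `Q ⋊ P` on `N ⋊ M`. -/
def sdActL (C : CompatData Y X) (u : Q × P) (a : N × M) : N × M :=
  (X.act.pm u.1 a.1 + C.aPN.pm u.2 a.1 + C.xi2 u.1 a.2, Y.act.pm u.2 a.2)

/-- The right action `[(n,m),(q,p)] = ([n,q] + [n,p] + ξ₁(m,q), [m,p])` of `Q ⋊ P` on `N ⋊ M`. -/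
def sdActR (C : CompatData Y X) (a : N × M) (u : Q × P) : N × M :=
  (X.act.mp a.1 u.1 + C.aPN.mp a.1 u.2 + C.xi1 a.2 u.1, Y.act.mp a.2 u.2)

/-- `φ(m) = (d_m, D_m)` lands in `Bider(Q,N)` and preserves brackets. -/
theorem phiMap_isHom {k M P N Q : Type*} [CommRing k]
    [AddCommGroup M] [Module k M] [AddCommGroup P] [Module k P]
    [AddCommGroup N] [Module k N] [AddCommGroup Q] [Module k Q]
    {LM : LeibnizBracket k M} {LP : LeibnizBracket k P}
    {LN : LeibnizBracket k N} {LQ : LeibnizBracket k Q}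
    {Y : LeibnizXMod k M P LM LP} {X : LeibnizXMod k N Q LN LQ}
    (C : CompatData Y X) :
    (∀ m : M, MemQN X (phiMap C m)) ∧
    (∀ m m' : M, phiMap C (LM.br m m') = brQN X.mu (phiMap C m) (phiMap C m')) := by
  constructor
  · intro m
    refine ⟨fun q q' => ?_, fun q q' => ?_, fun q q' => ?_⟩
    · simp only [phiMap, LinearMap.neg_apply, LinearMap.flip_apply, C.m5a, map_add, map_neg,
        neg_add]
    · simp only [phiMap, C.m5b]
    · simp only [phiMap, LinearMap.neg_apply, LinearMap.flip_apply, map_neg, ← C.m5c]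
  · intro m m'
    refine Prod.ext ?_ ?_ <;> apply LinearMap.ext <;> intro q
    · simp only [phiMap, brQN, LinearMap.neg_apply, LinearMap.flip_apply, LinearMap.sub_apply,
        LinearMap.comp_apply, map_neg, C.m4a, C.m2a, neg_neg, neg_sub]
      try abel
    · simp only [phiMap, brQN, LinearMap.neg_apply, LinearMap.flip_apply, LinearMap.sub_apply,
        LinearMap.comp_apply, map_neg, C.m4b, C.m2a, C.m2b, neg_neg]
      try abel
end

section
/- Let (𝔪,𝔭,η) and (𝔫,𝔮,μ) be Leibniz crossed modules equipped with compatible action data as in the hypotheses of the main construction, i.e. actions of 𝔭 on 𝔫 and on 𝔮 such that μ([p,n]) = [p,μ(n)], μ([n,p]) = [μ(n),p], [n,[p,q]] = [[n,p],q] − [[n,q],p], [p,[n,q]] = [[p,n],q] − [[p,q],n], [p,[q,n]] = [[p,q],n] − [[p,n],q], [n,[q,p]] = [[n,q],p] − [[n,p],q], [q,[n,p]] = [[q,n],p] − [[q,p],n], [q,[p,n]] = [[q,p],n] − [[q,n],p], with 𝔪 acting on 𝔫 and 𝔮 via η, and bilinear maps ξ₁: 𝔪×𝔮 → 𝔫,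 ξ₂: 𝔮×𝔪 → 𝔫 satisfying μ(ξ₂(q,m)) = [q,m], μ(ξ₁(m,q)) = [m,q], ξ₂(μ(n),m) = [n,m], ξ₁(m,μ(n)) = [m,n], ξ₂(q,[p,m]) = ξ₂([q,p],m) − [ξ₂(q,m),p], ξ₁([p,m],q) = ξ₂([p,q],m) − [p,ξ₂(q,m)], ξ₂(q,[m,p]) = [ξ₂(q,m),p] − ξ₂([q,p],m), ξ₁([m,p],q) = [ξ₁(m,q),p] − ξ₁(m,[q,p]), ξ₂(q,[m,m']) = [ξ₂(q,m),m'] − [ξ₂(q,m'),m], ξ₁([m,m'],q) = [ξ₁(m,q),m'] − [m,ξ₂(q,m')], ξ₂([q,q'],m) = [ξ₂(q,m),q'] + [q,ξ₂(q',m)], ξ₁(m,[q,q']) = [ξ₁(m,q),q'] − [ξ₁(m,q'),q], [q,ξ₁(m,q')] = −[q,ξ₂(q',m)], ξ₁(m,[p,q]) = −ξ₁(m,[q,p]), and [p,ξ₁(m,q)] = −[p,ξ₂(q,m)]. Then: (a) for each p ∈ 𝔭 the quadruple ψ(p) = ((σ₁^p,θ₁^p),(σ₂^p,θ₂^p)) with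 σ₁^p(n) = −[n,p], θ₁^p(n) = [p,n], σ₂^p(q) = −[q,p], θ₂^p(q) = [p,q] belongs to Bider(𝔫,𝔮,μ); (b) ψ preserves brackets with respect to the componentwise bracket on Bider(𝔫,𝔮,μ); (c) Δ∘φ = ψ∘η, where φ(m) = (d_m,D_m), d_m(q) = −ξ₂(q,m), D_m(q) = ξ₁(m,q), and Δ(d,D) = ((dμ,Dμ),(μd,μD)); and (d) φ([p,m]) = (σ₁^p d_m − d_m σ₂^p, θ₁^p d_m − d_m θ₂^p) and φ([m,p]) = (d_m σ₂^p − σ₁^p d_m, D_m σ₂^p − σ₁^p D_m) for all m ∈ 𝔪, p ∈ 𝔭. -/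
variable {k M P N Q : Type*} [CommRing k]
    [AddCommGroup M] [Module k M] [AddCommGroup P] [Module k P]
    [AddCommGroup N] [Module k N] [AddCommGroup Q] [Module k Q]
    {LM : LeibnizBracket k M} {LP : LeibnizBracket k P}
    {LN : LeibnizBracket k N} {LQ : LeibnizBracket k Q}
    {Y : LeibnizXMod k M P LM LP} {X : LeibnizXMod k N Q LN LQ}

/-- `ψ` lands in `Bider(N,Q,μ)`, preserves brackets, `Δ∘φ = ψ∘η`,
and `(φ,ψ)` respects the actions. -/
theorem psiMap_isHom {k M P N Q : Type*} [CommRing k]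
    [AddCommGroup M] [Module k M] [AddCommGroup P] [Module k P]
    [AddCommGroup N] [Module k N] [AddCommGroup Q] [Module k Q]
    {LM : LeibnizBracket k M} {LP : LeibnizBracket k P}
    {LN : LeibnizBracket k N} {LQ : LeibnizBracket k Q}
    {Y : LeibnizXMod k M P LM LP} {X : LeibnizXMod k N Q LN LQ}
    (C : CompatData Y X) :
    (∀ p : P, MemX X (psiMap C p)) ∧
    (∀ p p' : P, psiMap C (LP.br p p') = brX (psiMap C p) (psiMap C p')) ∧
    (∀ m : M, deltaMap X.mu (phiMap C m) = psiMap C (Y.mu m)) ∧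
    (∀ (p : P) (m : M),
      phiMap C (Y.act.pm p m) = actXL (psiMap C p) (phiMap C m) ∧
      phiMap C (Y.act.mp m p) = actXR (phiMap C m) (psiMap C p)) := by
  refine ⟨fun p => ?_, fun p p' => ?_, fun m => ?_, fun p m => ⟨?_, ?_⟩⟩
  · -- (a) ψ(p) ∈ Bider(N,Q,μ)
    refine ⟨⟨fun n n' => ?_, fun n n' => ?_, fun n n' => ?_⟩,
      ⟨fun q q' => ?_, fun q q' => ?_, fun q q' => ?_⟩,
      fun n => ?_, fun n => ?_, fun q n => ?_, fun n q => ?_,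
      fun q n => ?_, fun n q => ?_, fun q n => ?_, fun n q => ?_⟩ <;>
      simp only [psiMap, LinearMap.neg_apply, LinearMap.flip_apply, map_neg, neg_neg]
    · rw [C.aPN.act3]; abel
    · exact C.aPN.act1 p n n'
    · rw [C.aPN.act2, C.aPN.act3]; abel
    · rw [C.aPQ.act3]; abel
    · exact C.aPQ.act1 p q q'
    · rw [C.aPQ.act2, C.aPQ.act3]; abel
    · rw [C.eq2]
    · exact C.eq1 p n
    · rw [C.com5]; abel
    · rw [C.com4]; abel
    · exact C.com3 p q n
    · exact C.com2 p n q
    · rw [C.com5, C.com6]; abel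
    · rw [C.com4, C.com1]; abel
  · -- (b) ψ preserves brackets
    simp only [psiMap, brX]
    refine Prod.ext ?_ (Prod.ext ?_ (Prod.ext ?_ ?_)) <;> ext x <;>
      simp only [LinearMap.sub_apply, LinearMap.comp_apply, LinearMap.neg_apply,
        LinearMap.flip_apply, map_neg, neg_neg]
    · rw [C.aPN.act4]; abel
    · rw [C.aPN.act5]; abel
    · rw [C.aPQ.act4]; abel
    · rw [C.aPQ.act5]; abel
  · -- (c) Δ∘φ = ψ∘η
    simp only [deltaMap, phiMap, psiMap]
    refine Prod.ext ?_ (Prod.ext ?_ (Prod.ext ?_ ?_)) <;> ext x <;>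
      simp only [LinearMap.comp_apply, LinearMap.neg_apply, LinearMap.flip_apply, map_neg]
    · rw [C.m2a]
    · exact C.m2b m x
    · rw [C.m1a]
    · exact C.m1b m x
  · -- (d) left action
    simp only [phiMap, psiMap, actXL]
    refine Prod.ext ?_ ?_ <;> ext q <;>
      simp only [LinearMap.sub_apply, LinearMap.comp_apply, LinearMap.neg_apply,
        LinearMap.flip_apply, map_neg, neg_neg]
    · rw [C.m3a]; abel
    · rw [C.m3b]; abel
  · -- (d) right action
    simp only [phiMap, psiMap, actXR]
    refine Prod.ext ?_ ?_ <;> ext q <;>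
      simp only [LinearMap.sub_apply, LinearMap.comp_apply, LinearMap.neg_apply,
        LinearMap.flip_apply, map_neg, neg_neg]
    · rw [C.m3c]; abel
    · rw [C.m3d]; abel
end
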